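/- (Corollary 1: permutation equivariance of the DAG Convolutional Network) Let N ≥ 1, let A be an N×N real strictly lower triangular matrix with causal graph-shift operators S_k = W · D_k · W⁻¹, and let σ be a permutation of Fin N with permutation matrix P, yielding permuted GSOs S'_q built from A' = P A Pᵀ. Fix L ≥ 1, feature dimensions F_0, …, F_L, a function ρ : ℝ → ℝ applied entrywise to matrices, and for each layer ℓ ∈ {1,…,L} and node k a parameter matrix Θ_k^{(ℓ)} ∈ ℝ^{F_{ℓ−1} × F_ℓ}. From an input X^{(0)} ∈ ℝ^{N × F_0} define recursively X^{(ℓ)} = ρ.(∑_k S_k · X^{(ℓ−1)} · Θ_k^{(ℓ)}), and define the permuted network output X'^{(ℓ)} by the same recursion with S'_q in place of S_k, permuted parameters Θ'^{(ℓ)}_{σ(k)} = Θ_k^{(ℓ)}, and input X'^{(0)} = P · X^{(0)}. Then X'^{(L)} = P · X^{(L)}. -/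

import Mathlib

open Matrix BigOperators

/-!
Relabelling the nodes reindexes every matrix built from `A`: `P M = M.submatrix σ⁻¹ id` and
`P A Pᵀ = A.submatrix σ⁻¹ σ⁻¹`. Inversion and the reachability masks commute with reindexing,
so `W' = W.submatrix σ⁻¹ σ⁻¹` and `S'_{σ k} = (S_k).submatrix σ⁻¹ σ⁻¹`. Substituting
`k = σ⁻¹ q` in the sum of a layer shows that a layer sends row-permuted inputs to row-permuted
outputs (`ρ` acts entrywise), and the claim follows by induction on the depth.
-/

namespace Equiv.Perm

variable {n m R : Type*} [Fintype n] [DecidableEq n] [NonAssocSemiring R] (σ : Perm n)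

theorem permMatrix_mul_eq_submatrix (M : Matrix n m R) :
    σ.permMatrix R * M = M.submatrix σ id :=
  PEquiv.toMatrix_toPEquiv_mul σ M

theorem permMatrix_mul_mul_transpose (A : Matrix n n R) :
    σ.permMatrix R * A * (σ.permMatrix R)ᵀ = A.submatrix σ σ := by
  rw [transpose_permMatrix, permMatrix_mul_eq_submatrix, permMatrix, PEquiv.mul_toMatrix_toPEquiv]
  rfl

end Equiv.Perm

namespace Matrix

section TransitiveClosure

variable {n m R : Type*} [Fintype n] [DecidableEq n] [Fintype m] [DecidableEq m] [CommRing R]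

theorem inv_one_sub_submatrix_equiv (A : Matrix n n R) (e : m ≃ n) :
    (1 - A.submatrix e e)⁻¹ = (1 - A)⁻¹.submatrix e e := by
  rw [← inv_submatrix_equiv, submatrix_sub, Pi.sub_apply, Pi.sub_apply, submatrix_one_equiv]

variable [DecidableEq R]

noncomputable def causalGSO (W : Matrix n n R) (k : n) : Matrix n n R :=
  W * diagonal (fun i => if W k i ≠ 0 then 1 else 0) * W⁻¹

theorem causalGSO_submatrix (W : Matrix n n R) (e : m ≃ n) (q : m) :
    causalGSO (W.submatrix e e) q = (causalGSO W (e q)).submatrix e e := by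
  have hD : diagonal (fun i => if W.submatrix e e q i ≠ 0 then (1 : R) else 0) =
      (diagonal fun i => if W (e q) i ≠ 0 then (1 : R) else 0).submatrix e e := by
    rw [submatrix_diagonal_equiv]
    rfl
  rw [causalGSO, causalGSO, hD, inv_submatrix_equiv, submatrix_mul_equiv, submatrix_mul_equiv]

end TransitiveClosure

section Layer

variable {n m f g R : Type*} [Fintype n] [Fintype m] [Fintype f] [Semiring R]

def dcnLayer (ρ : R → R) (S : n → Matrix n n R) (Θ : n → Matrix f g R) (X : Matrix n f R) :
    Matrix n g R :=
  (∑ k, S k * X * Θ k).map ρ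

theorem dcnLayer_submatrix (ρ : R → R) (S : n → Matrix n n R) (Θ : n → Matrix f g R)
    (X : Matrix n f R) (e : m ≃ n) :
    dcnLayer ρ (fun q => (S (e q)).submatrix e e) (fun q => Θ (e q)) (X.submatrix e id) =
      (dcnLayer ρ S Θ X).submatrix e id := by
  have hterm : ∀ q, (S (e q)).submatrix e e * X.submatrix e id * Θ (e q) =
      (S (e q) * X * Θ (e q)).submatrix e id := fun q => by
    rw [submatrix_mul_equiv, submatrix_mul _ (Θ (e q)) e id id Function.bijective_id,
      submatrix_id_id]
  have hsum : ∑ q, (S (e q) * X * Θ (e q)).submatrix e id =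
      (∑ k, S k * X * Θ k).submatrix e id := by
    ext i j
    simp only [sum_apply, submatrix_apply, id]
    exact Equiv.sum_comp e fun k => (S k * X * Θ k) (e i) j
  simp only [dcnLayer, hterm, hsum, submatrix_map]

end Layer

end Matrix

theorem dcn_permutation_equivariant_general {N : ℕ}
    (A : Matrix (Fin N) (Fin N) ℝ)
    (W : Matrix (Fin N) (Fin N) ℝ) (hW : W = (1 - A)⁻¹)
    (D : Fin N → Matrix (Fin N) (Fin N) ℝ)
    (hD : ∀ k, D k = Matrix.diagonal (fun i => if W k i ≠ 0 then (1 : ℝ) else 0))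
    (S : Fin N → Matrix (Fin N) (Fin N) ℝ)
    (hS : ∀ k, S k = W * D k * W⁻¹)
    (σ : Equiv.Perm (Fin N))
    (P : Matrix (Fin N) (Fin N) ℝ)
    (hP : ∀ i j : Fin N, P i j = if σ j = i then 1 else 0)
    (A' : Matrix (Fin N) (Fin N) ℝ) (hA'def : A' = P * A * Pᵀ)
    (W' : Matrix (Fin N) (Fin N) ℝ) (hW' : W' = (1 - A')⁻¹)
    (D' : Fin N → Matrix (Fin N) (Fin N) ℝ)
    (hD' : ∀ q, D' q = Matrix.diagonal (fun i => if W' q i ≠ 0 then (1 : ℝ) else 0))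
    (S' : Fin N → Matrix (Fin N) (Fin N) ℝ)
    (hS' : ∀ q, S' q = W' * D' q * W'⁻¹)
    (L : ℕ)
    (F : ℕ → ℕ)
    (ρ : ℝ → ℝ)
    (Θ Θ' : (ℓ : ℕ) → Fin N → Matrix (Fin (F ℓ)) (Fin (F (ℓ + 1))) ℝ)
    (hΘ' : ∀ (ℓ : ℕ) (k : Fin N), Θ' ℓ (σ k) = Θ ℓ k)
    (X X' : (ℓ : ℕ) → Matrix (Fin N) (Fin (F ℓ)) ℝ)
    (hX'0 : X' 0 = P * X 0)
    (hXrec : ∀ ℓ : ℕ, X (ℓ + 1) = (∑ k : Fin N, S k * X ℓ * Θ ℓ k).map ρ)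
    (hX'rec : ∀ ℓ : ℕ, X' (ℓ + 1) = (∑ q : Fin N, S' q * X' ℓ * Θ' ℓ q).map ρ) :
    X' L = P * X L := by
  have hPσ : P = Equiv.Perm.permMatrix ℝ σ.symm := by
    ext i j
    simp [hP, Equiv.eq_symm_apply, eq_comm]
  have hW'σ : W' = W.submatrix σ.symm σ.symm := by
    rw [hW', hA'def, hPσ, Equiv.Perm.permMatrix_mul_mul_transpose, inv_one_sub_submatrix_equiv, hW]
  have hS'σ : S' = fun q => (S (σ.symm q)).submatrix σ.symm σ.symm := funext fun q => by
    rw [hS', hD', hS, hD, hW'σ, ← causalGSO, ← causalGSO, causalGSO_submatrix]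
  have hΘ'σ : ∀ ℓ, Θ' ℓ = fun q => Θ ℓ (σ.symm q) := fun ℓ => funext fun q => by
    rw [← hΘ', Equiv.apply_symm_apply]
  have hlayer : ∀ ℓ, X' ℓ = (X ℓ).submatrix σ.symm id := by
    intro ℓ
    induction ℓ with
    | zero => rw [hX'0, hPσ, Equiv.Perm.permMatrix_mul_eq_submatrix]
    | succ ℓ ih =>
      rw [hX'rec, hXrec, ih, hS'σ, hΘ'σ]
      exact dcnLayer_submatrix ρ S (Θ ℓ) (X ℓ) σ.symm
  rw [hlayer, hPσ, Equiv.Perm.permMatrix_mul_eq_submatrix]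

/-- Corollary 1: The DAG Convolutional Network is permutation
equivariant. With layer recursion `X^{(ℓ+1)} = ρ.(∑_k S_k X^{(ℓ)} Θ_k^{(ℓ)})`,
permuted parameters `Θ'_{σ(k)} = Θ_k`, permuted GSOs `S'_q`, and permuted input
`X'^{(0)} = P X^{(0)}`, the outputs satisfy `X'^{(L)} = P X^{(L)}`. -/
theorem dcn_permutation_equivariant {N : ℕ} (hN : 1 ≤ N)
    (A : Matrix (Fin N) (Fin N) ℝ)
    (hA : ∀ i j : Fin N, i ≤ j → A i j = 0)
    (W : Matrix (Fin N) (Fin N) ℝ) (hW : W = (1 - A)⁻¹)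
    (D : Fin N → Matrix (Fin N) (Fin N) ℝ)
    (hD : ∀ k, D k = Matrix.diagonal (fun i => if W k i ≠ 0 then (1 : ℝ) else 0))
    (S : Fin N → Matrix (Fin N) (Fin N) ℝ)
    (hS : ∀ k, S k = W * D k * W⁻¹)
    (σ : Equiv.Perm (Fin N))
    (P : Matrix (Fin N) (Fin N) ℝ)
    (hP : ∀ i j : Fin N, P i j = if σ j = i then 1 else 0)
    (A' : Matrix (Fin N) (Fin N) ℝ) (hA'def : A' = P * A * Pᵀ)
    (W' : Matrix (Fin N) (Fin N) ℝ) (hW' : W' = (1 - A')⁻¹)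
    (D' : Fin N → Matrix (Fin N) (Fin N) ℝ)
    (hD' : ∀ q, D' q = Matrix.diagonal (fun i => if W' q i ≠ 0 then (1 : ℝ) else 0))
    (S' : Fin N → Matrix (Fin N) (Fin N) ℝ)
    (hS' : ∀ q, S' q = W' * D' q * W'⁻¹)
    (L : ℕ) (hL : 1 ≤ L)
    (F : ℕ → ℕ)
    (ρ : ℝ → ℝ)
    (Θ Θ' : (ℓ : ℕ) → Fin N → Matrix (Fin (F ℓ)) (Fin (F (ℓ + 1))) ℝ)
    (hΘ' : ∀ (ℓ : ℕ) (k : Fin N), Θ' ℓ (σ k) = Θ ℓ k)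
    (X X' : (ℓ : ℕ) → Matrix (Fin N) (Fin (F ℓ)) ℝ)
    (hX'0 : X' 0 = P * X 0)
    (hXrec : ∀ ℓ : ℕ, X (ℓ + 1) = (∑ k : Fin N, S k * X ℓ * Θ ℓ k).map ρ)
    (hX'rec : ∀ ℓ : ℕ, X' (ℓ + 1) = (∑ q : Fin N, S' q * X' ℓ * Θ' ℓ q).map ρ) :
    X' L = P * X L :=
  dcn_permutation_equivariant_general A W hW D hD S hS σ P hP A' hA'def W' hW' D' hD' S' hS' L F ρ Θ
    Θ' hΘ' X X' hX'0 hXrec hX'rec
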